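/- arXiv:0708.0648 — 8 statements merged into one kernel-verified Lean document; each statement's English description precedes it below -/
import Mathlib

section
/- If Γ_{s,d}(1+Γ_{s,d}) < P_s G_{s,r}/σ², then there exists a unique threshold power P₀ > 0 such that ΔR(P_r) > 0 if and only if P_r > P₀ (namely P₀ is the unique solution of Γ_{s,r,d}(P₀) = Γ_{s,d}(1+Γ_{s,d})); if instead Γ_{s,d}(1+Γ_{s,d}) ≥ P_s G_{s,r}/σ², then ΔR(P_r) = 0 for all P_r ≥ 0. Hence the decision of 'when to relay' is a threshold policy in the relay power. -/
/-- The amplify-and-forward relayed SNR as a function of the relay power. -/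
noncomputable def relSNR (Ps Gsr Grd σ2 Pr : ℝ) : ℝ :=
  Pr * Ps * Grd * Gsr / (σ2 * (Pr * Grd + Ps * Gsr + σ2))

/-- The cooperative rate increase. -/
noncomputable def rateIncrease (Ps Gsd Gsr Grd σ2 W Pr : ℝ) : ℝ :=
  max ((W / 2) * Real.logb 2 (1 + Ps * Gsd / σ2 + relSNR Ps Gsr Grd σ2 Pr)
      - W * Real.logb 2 (1 + Ps * Gsd / σ2)) 0

lemma relSNR_nonneg (Ps Gsr Grd σ2 Pr : ℝ) (hPs : 0 < Ps) (hGsr : 0 < Gsr)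
    (hGrd : 0 < Grd) (hσ2 : 0 < σ2) (hPr : 0 ≤ Pr) :
    0 ≤ relSNR Ps Gsr Grd σ2 Pr := by
  unfold relSNR
  apply div_nonneg (by positivity)
  have h1 : 0 ≤ Pr * Grd := mul_nonneg hPr hGrd.le
  nlinarith [mul_nonneg hσ2.le h1, mul_pos hσ2 (mul_pos hPs hGsr), mul_pos hσ2 hσ2]

lemma rateIncrease_pos_iff (Ps Gsd Gsr Grd σ2 W Pr : ℝ)
    (hPs : 0 < Ps) (hGsd : 0 < Gsd) (hGsr : 0 < Gsr) (hGrd : 0 < Grd)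
    (hσ2 : 0 < σ2) (hW : 0 < W) (hPr : 0 ≤ Pr) :
    0 < rateIncrease Ps Gsd Gsr Grd σ2 W Pr ↔
      (Ps * Gsd / σ2) * (1 + Ps * Gsd / σ2) < relSNR Ps Gsr Grd σ2 Pr := by
  have ha : 0 < Ps * Gsd / σ2 := by positivity
  have hr : 0 ≤ relSNR Ps Gsr Grd σ2 Pr := relSNR_nonneg _ _ _ _ _ hPs hGsr hGrd hσ2 hPr
  have h1 : (0:ℝ) < 1 + Ps * Gsd / σ2 := by linarith
  have h2 : (0:ℝ) < 1 + Ps * Gsd / σ2 + relSNR Ps Gsr Grd σ2 Pr := by linarith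
  unfold rateIncrease
  rw [lt_max_iff]
  simp only [lt_self_iff_false, or_false, sub_pos]
  constructor
  · intro h
    have hlog : 2 * Real.logb 2 (1 + Ps * Gsd / σ2) <
        Real.logb 2 (1 + Ps * Gsd / σ2 + relSNR Ps Gsr Grd σ2 Pr) := by nlinarith
    rw [show (2:ℝ) * Real.logb 2 (1 + Ps * Gsd / σ2)
        = Real.logb 2 ((1 + Ps * Gsd / σ2) ^ (2:ℕ)) by
          rw [Real.logb_pow]; norm_num] at hlog
    rw [Real.logb_lt_logb_iff (by norm_num) (by positivity) h2] at hlog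
    nlinarith
  · intro h
    have hlog : Real.logb 2 ((1 + Ps * Gsd / σ2) ^ (2:ℕ)) <
        Real.logb 2 (1 + Ps * Gsd / σ2 + relSNR Ps Gsr Grd σ2 Pr) := by
      rw [Real.logb_lt_logb_iff (by norm_num) (by positivity) h2]
      nlinarith
    rw [Real.logb_pow] at hlog
    push_cast at hlog
    nlinarith

/-- "When to relay" is a threshold policy in the relay power: if
`Γ_{s,d}(1+Γ_{s,d}) < Ps·Gsr/σ²`, there is a unique threshold `P₀ > 0`
(the unique solution of `Γ_{s,r,d}(P₀) = Γ_{s,d}(1+Γ_{s,d})`) with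
`ΔR(Pr) > 0 ↔ Pr > P₀`; otherwise `ΔR ≡ 0`. -/
theorem rateIncrease_threshold (Ps Gsd Gsr Grd σ2 W : ℝ)
    (hPs : 0 < Ps) (hGsd : 0 < Gsd) (hGsr : 0 < Gsr) (hGrd : 0 < Grd)
    (hσ2 : 0 < σ2) (hW : 0 < W) :
    ((Ps * Gsd / σ2) * (1 + Ps * Gsd / σ2) < Ps * Gsr / σ2 →
      ∃! P0 : ℝ, 0 < P0 ∧
        relSNR Ps Gsr Grd σ2 P0 = (Ps * Gsd / σ2) * (1 + Ps * Gsd / σ2) ∧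
        ∀ Pr : ℝ, 0 ≤ Pr → (0 < rateIncrease Ps Gsd Gsr Grd σ2 W Pr ↔ P0 < Pr)) ∧
    ((Ps * Gsd / σ2) * (1 + Ps * Gsd / σ2) ≥ Ps * Gsr / σ2 →
      ∀ Pr : ℝ, 0 ≤ Pr → rateIncrease Ps Gsd Gsr Grd σ2 W Pr = 0) := by
  set c := (Ps * Gsd / σ2) * (1 + Ps * Gsd / σ2) with hc
  have hcpos : 0 < c := by
    have h : 0 < Ps * Gsd / σ2 := by positivity
    nlinarith
  have hden : ∀ Pr : ℝ, 0 ≤ Pr → 0 < σ2 * (Pr * Grd + Ps * Gsr + σ2) := by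
    intro Pr hPr
    have h1 : 0 ≤ Pr * Grd := mul_nonneg hPr hGrd.le
    nlinarith [mul_nonneg hσ2.le h1, mul_pos hσ2 (mul_pos hPs hGsr), mul_pos hσ2 hσ2]
  constructor
  · intro hlt
    -- coefficient Ps*Gsr - c*σ2 > 0
    have hcoef : 0 < Ps * Gsr - c * σ2 := by
      have h := (lt_div_iff₀ hσ2).mp hlt
      linarith
    set P0 := c * σ2 * (Ps * Gsr + σ2) / (Grd * (Ps * Gsr - c * σ2)) with hP0def
    have hP0pos : 0 < P0 := by apply div_pos (by positivity) (by positivity)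
    have hlin : P0 * (Grd * (Ps * Gsr - c * σ2)) = c * σ2 * (Ps * Gsr + σ2) := by
      rw [hP0def]; field_simp
    have hrelP0 : relSNR Ps Gsr Grd σ2 P0 = c := by
      unfold relSNR
      rw [div_eq_iff (ne_of_gt (hden P0 hP0pos.le))]
      nlinarith [hlin]
    have key : ∀ Pr : ℝ, 0 ≤ Pr → (c < relSNR Ps Gsr Grd σ2 Pr ↔ P0 < Pr) := by
      intro Pr hPr
      unfold relSNR
      rw [lt_div_iff₀ (hden Pr hPr)]
      constructor
      · intro h
        by_contra hn
        push_neg at hn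
        nlinarith [hlin, mul_nonneg (sub_nonneg.mpr hn) (mul_pos hGrd hcoef).le]
      · intro h; nlinarith [hlin, mul_pos (sub_pos.mpr h) (mul_pos hGrd hcoef)]
    refine ⟨P0, ⟨hP0pos, hrelP0, fun Pr hPr => ?_⟩, ?_⟩
    · rw [rateIncrease_pos_iff Ps Gsd Gsr Grd σ2 W Pr hPs hGsd hGsr hGrd hσ2 hW hPr]
      exact key Pr hPr
    · rintro y ⟨hy, hrely, -⟩
      -- y solves the same linear equation
      have hliny : y * (Grd * (Ps * Gsr - c * σ2)) = c * σ2 * (Ps * Gsr + σ2) := by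
        unfold relSNR at hrely
        rw [div_eq_iff (ne_of_gt (hden y hy.le))] at hrely
        nlinarith [hrely]
      have : (y - P0) * (Grd * (Ps * Gsr - c * σ2)) = 0 := by nlinarith [hlin, hliny]
      have := mul_eq_zero.mp this
      rcases this with h | h
      · linarith [sub_eq_zero.mp h]
      · exfalso; nlinarith
  · intro hge Pr hPr
    have hrlt : relSNR Ps Gsr Grd σ2 Pr ≤ c := by
      unfold relSNR
      rw [div_le_iff₀ (hden Pr hPr)]
      have h := (div_le_iff₀ hσ2).mp hge
      nlinarith [mul_le_mul_of_nonneg_left h (mul_nonneg hPr hGrd.le),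
        mul_pos (mul_pos hcpos hσ2) (by positivity : (0:ℝ) < Ps * Gsr + σ2)]
    have := rateIncrease_pos_iff Ps Gsd Gsr Grd σ2 W Pr hPs hGsd hGsr hGrd hσ2 hW hPr
    have hnonneg : 0 ≤ rateIncrease Ps Gsd Gsr Grd σ2 W Pr := le_max_right _ _
    by_contra h
    have : 0 < rateIncrease Ps Gsd Gsr Grd σ2 W Pr := lt_of_le_of_ne hnonneg (Ne.symm h)
    rw [rateIncrease_pos_iff Ps Gsd Gsr Grd σ2 W Pr hPs hGsd hGsr hGrd hσ2 hW hPr] at this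
    linarith
end

section
/- If the source–destination channel gain dominates the source–relay gain, G_{s,d} ≥ G_{s,r}, then ΔR(P_r) = 0 for every relay power P_r ≥ 0; i.e., such a user never benefits from using the relay, regardless of the power the relay allocates to it. -/
/-- If the source–destination channel gain dominates the source–relay gain
(`Gsd ≥ Gsr`), the user never benefits from the relay: `ΔR(Pr) = 0` for every
relay power `Pr ≥ 0`. -/
theorem rateIncrease_eq_zero_of_direct_gain_dominates (Ps Gsd Gsr Grd σ2 W : ℝ)
    (hPs : 0 < Ps) (hGsd : 0 < Gsd) (hGsr : 0 < Gsr) (hGrd : 0 < Grd)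
    (hσ2 : 0 < σ2) (hW : 0 < W) (hdom : Gsd ≥ Gsr) :
    ∀ Pr : ℝ, 0 ≤ Pr → rateIncrease Ps Gsd Gsr Grd σ2 W Pr = 0 := by
  intro Pr hPr
  set A : ℝ := Ps * Gsd / σ2 with hA
  set S : ℝ := relSNR Ps Gsr Grd σ2 Pr with hS
  have hApos : 0 < A := by positivity
  have hden : 0 < σ2 * (Pr * Grd + Ps * Gsr + σ2) := by positivity
  have hSnonneg : 0 ≤ S := by
    rw [hS, relSNR]
    positivity
  -- S ≤ Ps * Gsr / σ2 ≤ A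
  have hSle : S ≤ A := by
    have h1 : S ≤ Ps * Gsr / σ2 := by
      rw [hS, relSNR, div_le_div_iff₀ hden hσ2]
      ring_nf
      nlinarith [mul_nonneg (mul_nonneg hPs.le hGsr.le) (sq_nonneg σ2), mul_nonneg (mul_nonneg (sq_nonneg Ps) (sq_nonneg Gsr)) hσ2.le]
    have h2 : Ps * Gsr / σ2 ≤ A := by
      rw [hA]
      apply div_le_div_of_nonneg_right _ hσ2.le
      nlinarith
    linarith
  have hsq : 1 + A + S ≤ (1 + A) ^ 2 := by nlinarith
  have hposarg : (0:ℝ) < 1 + A + S := by linarith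
  have hlog : Real.logb 2 (1 + A + S) ≤ Real.logb 2 ((1 + A) ^ 2) := by
    gcongr
    norm_num
  have hlog2 : Real.logb 2 ((1 + A) ^ 2) = 2 * Real.logb 2 (1 + A) := by
    rw [Real.logb_pow]
    push_cast
    ring
  have hmain : (W / 2) * Real.logb 2 (1 + A + S) - W * Real.logb 2 (1 + A) ≤ 0 := by
    have := mul_le_mul_of_nonneg_left hlog (by linarith : (0:ℝ) ≤ W / 2)
    rw [hlog2] at this
    nlinarith
  rw [rateIncrease]
  exact max_eq_right hmain
end

section
/- Theorem 1 (best response in the SNR auction, interior case): Fix positive parameters P_s, G_{s,d}, G_{s,r}, G_{r,d}, σ², W, P, β, set Γ_{s,d} = P_s G_{s,d}/σ², π̲ = W/(2·ln2·(1+Γ_{s,d}+Γ_{s,r,d}(P))), let π̂ be the smallest positive root of g^s(π) = π(1+Γ_{s,d}) − (W/2)(log₂(2π·ln2·(1+Γ_{s,d})²/W) + 1/ln2), and assume π̂ > π̲. Then for every price π ∈ (π̲, π̂) and every opponents' total bid b_{-i} ≥ 0, the payoff U(b) = ΔR(P_{r,d}(b)) − π·Γ_{s,r,d}(P_{r,d}(b)),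 where P_{r,d}(b) = bP/(b+b_{-i}+β), has a unique maximizer over b ≥ 0, namely b* = f^s(π)·(b_{-i}+β) with f^s(π) = (P_s G_{s,r}+σ²)σ² / ( P G_{r,d} P_s G_{s,r}/(W/(2π·ln2) − 1 − Γ_{s,d}) − (P_s G_{s,r}+P G_{r,d}+σ²)σ² ), and the maximal payoff U(b*) is strictly positive. -/
/-- The critical-price function of the SNR auction. -/
noncomputable def gs (Γ W π : ℝ) : ℝ :=
  π * (1 + Γ) -
    (W / 2) * (Real.logb 2 (2 * π * Real.log 2 * (1 + Γ) ^ 2 / W) + 1 / Real.log 2)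

/-- The best-response slope `f^s(π)` of the SNR auction. -/
noncomputable def fs (Ps Gsd Gsr Grd σ2 W P π : ℝ) : ℝ :=
  (Ps * Gsr + σ2) * σ2 /
    (P * Grd * Ps * Gsr / (W / (2 * π * Real.log 2) - 1 - Ps * Gsd / σ2)
      - (Ps * Gsr + P * Grd + σ2) * σ2)

/-- User `i`'s payoff in the SNR auction when bidding `b` against opponents'
total bid `bmi`: rate increase minus `π` times the realized SNR increase. -/
noncomputable def payoffSNR (Ps Gsd Gsr Grd σ2 W P β π bmi b : ℝ) : ℝ :=
  rateIncrease Ps Gsd Gsr Grd σ2 W (b * P / (b + bmi + β)) -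
    π * relSNR Ps Gsr Grd σ2 (b * P / (b + bmi + β))

/-- Strict concavity step: the function `y ↦ (W/(2L))·log y − π·y` attains its strict
maximum at `ystar = W/(2πL)`. -/
lemma snr_concave_aux (W L π y ystar : ℝ) (hW : 0 < W) (hL : 0 < L) (hπ : 0 < π)
    (hy : 0 < y) (hystar : ystar = W / (2 * π * L)) (hne : y ≠ ystar) :
    W / 2 * (Real.log y / L) - π * y < W / 2 * (Real.log ystar / L) - π * ystar := by
  have hys : 0 < ystar := by rw [hystar]; positivity
  have hu1 : y / ystar ≠ 1 := fun h => hne ((div_eq_one_iff_eq hys.ne').mp h)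
  have h1 : Real.log y - Real.log ystar < y / ystar - 1 := by
    rw [← Real.log_div hy.ne' hys.ne']
    exact Real.log_lt_sub_one_of_pos (div_pos hy hys) hu1
  have hπeq : π = W / (2 * L * ystar) := by
    rw [hystar]; field_simp
  have h2 : W / (2 * L) * (Real.log y - Real.log ystar)
      < W / (2 * L) * (y / ystar - 1) :=
    mul_lt_mul_of_pos_left h1 (by positivity)
  have h3 : W / (2 * L) * (y / ystar - 1) = π * y - π * ystar := by
    rw [hπeq]; field_simp
  rw [h3, mul_sub] at h2
  have e1 : W / 2 * (Real.log y / L) = W / (2 * L) * Real.log y := by ring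
  have e2 : W / 2 * (Real.log ystar / L) = W / (2 * L) * Real.log ystar := by ring
  linarith

/-- If `gs` is negative at a positive point `a`, it has a positive root below `a`. -/
lemma gs_root_lt (Γ W a : ℝ) (hΓ : 0 < Γ) (hW : 0 < W) (ha : 0 < a)
    (hneg : gs Γ W a < 0) : ∃ t : ℝ, 0 < t ∧ t < a ∧ gs Γ W t = 0 := by
  set L := Real.log 2 with hLdef
  have hL : 0 < L := Real.log_pos one_lt_two
  have hΓ1 : (0:ℝ) < 1 + Γ := by linarith
  set K := 2 * L * (1 + Γ) ^ 2 / W with hKdef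
  have hK : 0 < K := by
    apply div_pos _ hW
    have := pow_pos hΓ1 2
    nlinarith
  set c2 := W / (2 * L) with hc2def
  have hc2 : 0 < c2 := by
    apply div_pos hW; linarith
  set c3 := (W / 2) * (Real.log K / L + 1 / L) with hc3def
  have hGeq : ∀ t : ℝ, 0 < t → gs Γ W t = t * (1 + Γ) - c2 * Real.log t - c3 := by
    intro t ht
    unfold gs
    rw [← hLdef]
    have h1 : 2 * t * L * (1 + Γ) ^ 2 / W = K * t := by rw [hKdef]; ring
    rw [h1, Real.logb, Real.log_mul hK.ne' ht.ne', ← hLdef, hc2def, hc3def]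
    ring
  set ε := min (a / 2) (Real.exp (-(c3 / c2) - 1)) with hεdef
  have hε0 : 0 < ε := lt_min (by linarith) (Real.exp_pos _)
  have hεa : ε < a := lt_of_le_of_lt (min_le_left _ _) (by linarith)
  have hlogε : Real.log ε ≤ -(c3 / c2) - 1 := by
    calc Real.log ε ≤ Real.log (Real.exp (-(c3 / c2) - 1)) :=
          Real.log_le_log hε0 (min_le_right _ _)
      _ = -(c3 / c2) - 1 := Real.log_exp _
  have hGε : 0 < ε * (1 + Γ) - c2 * Real.log ε - c3 := by
    have h1 : c2 * Real.log ε ≤ c2 * (-(c3 / c2) - 1) :=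
      mul_le_mul_of_nonneg_left hlogε hc2.le
    have h2 : c2 * (-(c3 / c2) - 1) = -c3 - c2 := by field_simp
    nlinarith [mul_pos hε0 hΓ1]
  have hcont : ContinuousOn (fun t : ℝ => t * (1 + Γ) - c2 * Real.log t - c3)
      (Set.Icc ε a) := by
    apply ContinuousOn.sub
    apply ContinuousOn.sub
    · exact continuousOn_id.mul continuousOn_const
    · exact continuousOn_const.mul (Real.continuousOn_log.mono
        (fun x hx => by simpa using (lt_of_lt_of_le hε0 hx.1).ne'))
    · exact continuousOn_const
  have hmem : (0:ℝ) ∈ Set.Icc ((fun t : ℝ => t * (1 + Γ) - c2 * Real.log t - c3) a)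
      ((fun t : ℝ => t * (1 + Γ) - c2 * Real.log t - c3) ε) := by
    constructor
    · simp only
      rw [← hGeq a ha]; linarith
    · simp only
      linarith
  obtain ⟨t, htmem, htval⟩ := intermediate_value_Icc' hεa.le hcont hmem
  simp only at htval
  have ht0 : 0 < t := lt_of_lt_of_le hε0 htmem.1
  refine ⟨t, ht0, ?_, ?_⟩
  · rcases lt_or_eq_of_le htmem.2 with h | h
    · exact h
    · exfalso
      rw [hGeq a ha] at hneg
      rw [h] at htval
      linarith
  · rw [hGeq t ht0]; exact htval

set_option maxHeartbeats 1000000 in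
/-- Theorem 1, interior case: if `π̂ > π̲` and the price satisfies
`π̲ < π < π̂` (where `π̂` is the smallest positive root of `g^s`), then for any
opponents' total bid `bmi ≥ 0` the payoff has the unique maximizer
`b* = f^s(π)·(bmi+β)` over `b ≥ 0`, and the maximal payoff is strictly positive. -/
theorem snr_auction_best_response_interior (Ps Gsd Gsr Grd σ2 W P β π πhat : ℝ)
    (hPs : 0 < Ps) (hGsd : 0 < Gsd) (hGsr : 0 < Gsr) (hGrd : 0 < Grd)
    (hσ2 : 0 < σ2) (hW : 0 < W) (hP : 0 < P) (hβ : 0 < β)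
    (hπhat_pos : 0 < πhat)
    (hπhat_root : gs (Ps * Gsd / σ2) W πhat = 0)
    (hπhat_min : ∀ π' : ℝ, 0 < π' → gs (Ps * Gsd / σ2) W π' = 0 → πhat ≤ π')
    (hreg : W / (2 * Real.log 2 * (1 + Ps * Gsd / σ2 + relSNR Ps Gsr Grd σ2 P)) < πhat)
    (hπlow : W / (2 * Real.log 2 * (1 + Ps * Gsd / σ2 + relSNR Ps Gsr Grd σ2 P)) < π)
    (hπhigh : π < πhat)
    (bmi : ℝ) (hbmi : 0 ≤ bmi) :
    (∀ b : ℝ, 0 ≤ b → b ≠ fs Ps Gsd Gsr Grd σ2 W P π * (bmi + β) →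
      payoffSNR Ps Gsd Gsr Grd σ2 W P β π bmi b <
        payoffSNR Ps Gsd Gsr Grd σ2 W P β π bmi
          (fs Ps Gsd Gsr Grd σ2 W P π * (bmi + β))) ∧
    0 < payoffSNR Ps Gsd Gsr Grd σ2 W P β π bmi
          (fs Ps Gsd Gsr Grd σ2 W P π * (bmi + β)) := by
  have hL : 0 < Real.log 2 := Real.log_pos one_lt_two
  set L := Real.log 2 with hLdef
  clear_value L
  set Γ := Ps * Gsd / σ2 with hΓdef
  have hΓ : 0 < Γ := by rw [hΓdef]; positivity
  clear_value Γ
  have hΓ1 : (0:ℝ) < 1 + Γ := by linarith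
  have hB : 0 < bmi + β := by linarith
  set B := bmi + β with hBdef
  clear_value B
  set A := P * Grd * Ps * Gsr with hAdef
  have hA : 0 < A := by rw [hAdef]; positivity
  clear_value A
  set C := Ps * Gsr + σ2 with hCdef
  have hC : 0 < C := by rw [hCdef]; positivity
  clear_value C
  have hE : 0 < P * Grd + C := by
    have := mul_pos hP hGrd; linarith
  -- the saturation SNR
  have hS_eq : relSNR Ps Gsr Grd σ2 P = A / (σ2 * (P * Grd + C)) := by
    unfold relSNR; rw [hAdef, hCdef]; ring_nf
  have hSpos : 0 < relSNR Ps Gsr Grd σ2 P := by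
    rw [hS_eq]; exact div_pos hA (mul_pos hσ2 hE)
  set S := relSNR Ps Gsr Grd σ2 P with hSdef
  clear_value S
  -- positivity of the price
  have hπlow0 : 0 < W / (2 * L * (1 + Γ + S)) := by
    apply div_pos hW
    have := mul_pos hL (show (0:ℝ) < 1 + Γ + S by linarith)
    linarith
  have hπpos : 0 < π := lt_trans hπlow0 hπlow
  have h2πL : 0 < 2 * π * L := mul_pos (by linarith) hL
  -- the interior critical SNR value
  set xstar := W / (2 * π * L) - 1 - Γ with hxdef
  clear_value xstar
  have hyid : 1 + Γ + xstar = W / (2 * π * L) := by rw [hxdef]; ring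
  -- π < W/(2L(1+Γ)), hence xstar > 0
  have h2LΓ : 0 < 2 * L * (1 + Γ) := mul_pos (by linarith) hΓ1
  have hπbar_pos : 0 < W / (2 * L * (1 + Γ)) := div_pos hW h2LΓ
  have hπbar_arg : 2 * (W / (2 * L * (1 + Γ))) * L * (1 + Γ) ^ 2 / W = 1 + Γ := by
    field_simp [hW.ne', hL.ne', hΓ1.ne'] <;> ring
  have hgs_pibar : gs Γ W (W / (2 * L * (1 + Γ))) < 0 := by
    unfold gs
    rw [← hLdef, hπbar_arg]
    have hlogb : 0 < Real.logb 2 (1 + Γ) := Real.logb_pos one_lt_two (by linarith)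
    have e1 : W / (2 * L * (1 + Γ)) * (1 + Γ) = W / 2 * (1 / L) := by
      field_simp [hL.ne', hΓ1.ne'] <;> ring
    rw [e1, mul_add]
    have := mul_pos (show (0:ℝ) < W / 2 by linarith) hlogb
    linarith
  have hπhat_lt : πhat < W / (2 * L * (1 + Γ)) := by
    obtain ⟨t, ht0, hta, htroot⟩ := gs_root_lt Γ W _ hΓ hW hπbar_pos hgs_pibar
    exact lt_of_le_of_lt (hπhat_min t ht0 htroot) hta
  have hxpos : 0 < xstar := by
    have h1 : π * (2 * L * (1 + Γ)) < W :=
      (lt_div_iff₀ h2LΓ).mp (lt_trans hπhigh hπhat_lt)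
    have h2 : 1 + Γ < W / (2 * π * L) := by
      rw [lt_div_iff₀ h2πL]; nlinarith [h1]
    rw [hxdef]; linarith
  -- positivity of gs at π
  have gpos : 0 < gs Γ W π := by
    rcases lt_trichotomy (gs Γ W π) 0 with h | h | h
    · exfalso
      obtain ⟨t, ht0, hta, htroot⟩ := gs_root_lt Γ W π hΓ hW hπpos h
      have := hπhat_min t ht0 htroot
      linarith
    · exact absurd (hπhat_min π hπpos h) (not_le.mpr hπhigh)
    · exact h
  -- xstar < S
  have hxS : xstar < S := by
    have h1 : W < π * (2 * L * (1 + Γ + S)) :=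
      (div_lt_iff₀ (mul_pos (by linarith) (show (0:ℝ) < 1 + Γ + S by linarith))).mp hπlow
    have h2 : W / (2 * π * L) < 1 + Γ + S := by
      rw [div_lt_iff₀ h2πL]; nlinarith [h1]
    rw [hxdef]; linarith
  have hxA : xstar * (σ2 * (P * Grd + C)) < A := by
    rw [hS_eq] at hxS
    exact (lt_div_iff₀ (mul_pos hσ2 hE)).mp hxS
  -- the best-response slope is positive
  set D := A / xstar - (P * Grd + C) * σ2 with hDdef
  clear_value D
  have hD : 0 < D := by
    rw [hDdef, sub_pos, lt_div_iff₀ hxpos]; nlinarith [hxA]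
  have hxD : xstar * D = A - xstar * (σ2 * (P * Grd + C)) := by
    have hc : xstar * (A / xstar) = A := by
      field_simp
    rw [hDdef, mul_sub, hc]
    ring
  have hfs_eq : fs Ps Gsd Gsr Grd σ2 W P π = C * σ2 / D := by
    unfold fs
    rw [← hLdef, ← hΓdef]
    rw [hDdef, hCdef, hAdef, hxdef]
    ring_nf
  set bstar := fs Ps Gsd Gsr Grd σ2 W P π * B with hbstardef
  clear_value bstar
  have hbstar_pos : 0 < bstar := by
    rw [hbstardef, hfs_eq]
    exact mul_pos (div_pos (mul_pos hC hσ2) hD) hB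
  -- denominators
  have hden : ∀ b : ℝ, 0 ≤ b → 0 < σ2 * (b * (P * Grd + C) + C * B) := by
    intro b hb
    apply mul_pos hσ2
    have h1 := mul_nonneg hb hE.le
    have h2 := mul_pos hC hB
    linarith
  -- the SNR received when bidding b
  have hX_eq : ∀ b : ℝ, 0 ≤ b → relSNR Ps Gsr Grd σ2 (b * P / (b + bmi + β))
      = b * A / (σ2 * (b * (P * Grd + C) + C * B)) := by
    intro b hb
    have hbB : 0 < b + bmi + β := by linarith
    have hPr : 0 ≤ b * P / (b + bmi + β) := by positivity
    have hd1 : 0 < σ2 * (b * P / (b + bmi + β) * Grd + Ps * Gsr + σ2) := by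
      apply mul_pos hσ2
      have h1 := mul_nonneg hPr hGrd.le
      have h2 := mul_pos hPs hGsr
      linarith
    unfold relSNR
    rw [div_eq_div_iff hd1.ne' (hden b hb).ne']
    rw [hAdef, hCdef, hBdef]
    field_simp [hbB.ne'] <;> ring
  -- X at bstar equals xstar
  have hbstar_eq : bstar * (A - xstar * (σ2 * (P * Grd + C))) = xstar * (σ2 * C * B) := by
    rw [hbstardef, hfs_eq, ← hxD, div_mul_eq_mul_div, div_mul_eq_mul_div,
      div_eq_iff hD.ne']
    ring
  have hXbstar : bstar * A / (σ2 * (bstar * (P * Grd + C) + C * B)) = xstar := by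
    rw [div_eq_iff (hden bstar hbstar_pos.le).ne']
    linear_combination hbstar_eq
  -- payoff as a function of the received SNR
  have hpayoff : ∀ b : ℝ, 0 ≤ b → payoffSNR Ps Gsd Gsr Grd σ2 W P β π bmi b
      = max (W / 2 * Real.logb 2 (1 + Γ + b * A / (σ2 * (b * (P * Grd + C) + C * B)))
          - W * Real.logb 2 (1 + Γ)) 0
        - π * (b * A / (σ2 * (b * (P * Grd + C) + C * B))) := by
    intro b hb
    unfold payoffSNR rateIncrease
    rw [hX_eq b hb, ← hΓdef]
  -- the key identity: value at xstar is gs Γ W π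
  have hπx : π * xstar = W / 2 * (1 / L) - π * (1 + Γ) := by
    rw [hxdef]
    field_simp [hπpos.ne', hL.ne'] <;> ring
  have hgs_eq : W / 2 * Real.logb 2 (1 + Γ + xstar) - W * Real.logb 2 (1 + Γ)
      - π * xstar = gs Γ W π := by
    unfold gs
    rw [← hLdef]
    have harg : 2 * π * L * (1 + Γ) ^ 2 / W = (1 + Γ) ^ 2 / (1 + Γ + xstar) := by
      rw [hyid, div_eq_div_iff hW.ne' (div_pos hW h2πL).ne']
      field_simp <;> ring
    rw [harg, Real.logb_div (by positivity) (by rw [hyid]; positivity),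
      Real.logb_pow]
    push_cast
    linear_combination -hπx
  have hstar_nonneg : 0 ≤ W / 2 * Real.logb 2 (1 + Γ + xstar)
      - W * Real.logb 2 (1 + Γ) := by
    linarith [mul_pos hπpos hxpos, gpos, hgs_eq]
  have keystar : max (W / 2 * Real.logb 2 (1 + Γ + xstar)
      - W * Real.logb 2 (1 + Γ)) 0 - π * xstar = gs Γ W π := by
    rw [max_eq_left hstar_nonneg]; exact hgs_eq
  -- strict comparison for any x ≠ xstar
  have key : ∀ x : ℝ, 0 ≤ x → x ≠ xstar →
      max (W / 2 * Real.logb 2 (1 + Γ + x) - W * Real.logb 2 (1 + Γ)) 0 - π * x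
        < gs Γ W π := by
    intro x hx hne
    rcases le_total (W / 2 * Real.logb 2 (1 + Γ + x) - W * Real.logb 2 (1 + Γ)) 0
      with h | h
    · rw [max_eq_right h]
      linarith [mul_nonneg hπpos.le hx, gpos]
    · rw [max_eq_left h]
      have hy : (0:ℝ) < 1 + Γ + x := by linarith
      have hcomp := snr_concave_aux W L π (1 + Γ + x) (1 + Γ + xstar) hW hL hπpos hy
        hyid (fun hc => hne (by linarith))
      have e1 : Real.logb 2 (1 + Γ + x) = Real.log (1 + Γ + x) / L := by
        rw [Real.logb, ← hLdef]
      have e2 : Real.logb 2 (1 + Γ + xstar) = Real.log (1 + Γ + xstar) / L := by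
        rw [Real.logb, ← hLdef]
      rw [e1]
      rw [e2] at hgs_eq
      linarith [hcomp, hgs_eq]
  -- injectivity: any other bid gives a different SNR
  have hXne : ∀ b : ℝ, 0 ≤ b → b ≠ bstar →
      b * A / (σ2 * (b * (P * Grd + C) + C * B)) ≠ xstar := by
    intro b hb hbne hXb
    apply hbne
    have e1 : b * A = xstar * (σ2 * (b * (P * Grd + C) + C * B)) :=
      (div_eq_iff (hden b hb).ne').mp hXb
    have e2 : bstar * A = xstar * (σ2 * (bstar * (P * Grd + C) + C * B)) :=
      (div_eq_iff (hden bstar hbstar_pos.le).ne').mp hXbstar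
    have e3 : (b - bstar) * (A - xstar * (σ2 * (P * Grd + C))) = 0 := by
      linear_combination e1 - e2
    have e4 : 0 < A - xstar * (σ2 * (P * Grd + C)) := by linarith
    rcases mul_eq_zero.mp e3 with h | h
    · linarith
    · exact absurd h e4.ne'
  constructor
  · intro b hb hbne
    rw [hpayoff b hb, hpayoff bstar hbstar_pos.le, hXbstar, keystar]
    exact key _ (div_nonneg (mul_nonneg hb hA.le) (hden b hb).le) (hXne b hb hbne)
  · rw [hpayoff bstar hbstar_pos.le, hXbstar, keystar]
    exact gpos
end

section
/- Theorem 1 (best response in the SNR auction, high-price case): Fix positive parameters P_s, G_{s,d}, G_{s,r}, G_{r,d}, σ², W, P, β, set Γ_{s,d} = P_s G_{s,d}/σ², and let π̂ be the smallest positive root of g^s(π) = π(1+Γ_{s,d}) − (W/2)(log₂(2π·ln2·(1+Γ_{s,d})²/W) + 1/ln2), assumed to exist. Then for every price π ≥ π̂ and every opponents' total bid b_{-i} ≥ 0, the payoff U(b) = ΔR(P_{r,d}(b)) − π·Γ_{s,r,d}(P_{r,d}(b)), where P_{r,d}(b) = bP/(b+b_{-i}+β), satisfies U(b) ≤ 0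 for all b ≥ 0, with U(0) = 0; i.e., the user cannot obtain a positive payoff no matter what bid it submits, so zero bidding (direct transmission) is a best response. -/
/-- Key analytic lemma: if `πh > 0` is a root of `g^s`, then the tangent-line
bound on the concave log shows the rate gain is dominated by `πh * x`. -/
lemma snr_key (Γ W πh : ℝ) (hΓ : 0 < Γ) (hW : 0 < W) (hπ : 0 < πh)
    (hroot : gs Γ W πh = 0) :
    ∀ x : ℝ, 0 ≤ x →
      (W / 2) * Real.logb 2 (1 + Γ + x) - W * Real.logb 2 (1 + Γ) ≤ πh * x := by
  intro x hx
  have hL2 : (0:ℝ) < Real.log 2 := Real.log_pos (by norm_num)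
  set L2 : ℝ := Real.log 2 with hL2def
  set c : ℝ := 2 * πh * L2 / W with hc
  have hcpos : 0 < c := by rw [hc]; positivity
  have hWc : W * c = 2 * πh * L2 := by rw [hc]; field_simp
  have ht : (0:ℝ) < 1 + Γ + x := by linarith
  have h1Γ : (0:ℝ) < 1 + Γ := by linarith
  -- rewrite the root equation using natural logs
  have hlogA : Real.log (2 * πh * Real.log 2 * (1 + Γ) ^ 2 / W)
      = Real.log c + 2 * Real.log (1 + Γ) := by
    rw [show 2 * πh * Real.log 2 * (1 + Γ) ^ 2 / W = c * (1 + Γ) ^ 2 by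
      rw [hc]; ring]
    rw [Real.log_mul (ne_of_gt hcpos) (by positivity), Real.log_pow]
    push_cast; ring
  rw [gs, Real.logb, hlogA] at hroot
  have hroot' : πh * (1 + Γ) * L2
      = (W / 2) * (Real.log c + 2 * Real.log (1 + Γ) + 1) := by
    have hL2ne : L2 ≠ 0 := ne_of_gt hL2
    field_simp at hroot
    linarith
  -- tangent-line bound for log
  have hlog : Real.log (1 + Γ + x) ≤ (1 + Γ + x) * c - 1 - Real.log c := by
    have h := Real.log_le_sub_one_of_pos (mul_pos ht hcpos)
    rw [Real.log_mul (ne_of_gt ht) (ne_of_gt hcpos)] at h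
    linarith
  have h2 : (W / 2) * ((1 + Γ + x) * c) = πh * L2 * (1 + Γ + x) := by
    rw [show (W / 2) * ((1 + Γ + x) * c) = (W * c) * (1 + Γ + x) / 2 by ring, hWc]
    ring
  have hmul2 : (W / 2) * Real.log (1 + Γ + x)
      ≤ πh * L2 * (1 + Γ + x) - W / 2 - (W / 2) * Real.log c := by
    calc (W / 2) * Real.log (1 + Γ + x)
        ≤ (W / 2) * ((1 + Γ + x) * c - 1 - Real.log c) :=
          mul_le_mul_of_nonneg_left hlog (by positivity)
      _ = (W / 2) * ((1 + Γ + x) * c) - W / 2 - (W / 2) * Real.log c := by ring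
      _ = πh * L2 * (1 + Γ + x) - W / 2 - (W / 2) * Real.log c := by rw [h2]
  rw [Real.logb, Real.logb, ← hL2def]
  rw [show (W / 2) * (Real.log (1 + Γ + x) / L2) - W * (Real.log (1 + Γ) / L2)
      = ((W / 2) * Real.log (1 + Γ + x) - W * Real.log (1 + Γ)) / L2 by ring,
    div_le_iff₀ hL2]
  nlinarith [hmul2, hroot']

/-- Theorem 1, high-price case: if the price satisfies `π ≥ π̂` (the smallest
positive root of `g^s`), then no bid yields a positive payoff, and bidding zero
(direct transmission) yields payoff zero, hence is a best response. -/
theorem snr_auction_best_response_high_price (Ps Gsd Gsr Grd σ2 W P β π πhat : ℝ)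
    (hPs : 0 < Ps) (hGsd : 0 < Gsd) (hGsr : 0 < Gsr) (hGrd : 0 < Grd)
    (hσ2 : 0 < σ2) (hW : 0 < W) (hP : 0 < P) (hβ : 0 < β)
    (hπhat_pos : 0 < πhat)
    (hπhat_root : gs (Ps * Gsd / σ2) W πhat = 0)
    (hπhat_min : ∀ π' : ℝ, 0 < π' → gs (Ps * Gsd / σ2) W π' = 0 → πhat ≤ π')
    (hπ : πhat ≤ π)
    (bmi : ℝ) (hbmi : 0 ≤ bmi) :
    (∀ b : ℝ, 0 ≤ b → payoffSNR Ps Gsd Gsr Grd σ2 W P β π bmi b ≤ 0) ∧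
    payoffSNR Ps Gsd Gsr Grd σ2 W P β π bmi 0 = 0 := by
  set Γ : ℝ := Ps * Gsd / σ2 with hΓdef
  have hΓ : 0 < Γ := div_pos (mul_pos hPs hGsd) hσ2
  have hL2 : (0:ℝ) < Real.log 2 := Real.log_pos (by norm_num)
  have hkey := snr_key Γ W πhat hΓ hW hπhat_pos hπhat_root
  refine ⟨?_, ?_⟩
  · intro b hb
    have hden : 0 < b + bmi + β := by linarith
    set Pr : ℝ := b * P / (b + bmi + β) with hPrdef
    have hPr : 0 ≤ Pr := div_nonneg (mul_nonneg hb hP.le) hden.le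
    set x : ℝ := relSNR Ps Gsr Grd σ2 Pr with hxdef
    have hx : 0 ≤ x := by
      rw [hxdef, relSNR]
      apply div_nonneg
      · positivity
      · have : 0 < Pr * Grd + Ps * Gsr + σ2 := by positivity
        positivity
    have hπpos : 0 < π := lt_of_lt_of_le hπhat_pos hπ
    have h1 : (W / 2) * Real.logb 2 (1 + Γ + x) - W * Real.logb 2 (1 + Γ) ≤ π * x := by
      calc (W / 2) * Real.logb 2 (1 + Γ + x) - W * Real.logb 2 (1 + Γ)
          ≤ πhat * x := hkey x hx
        _ ≤ π * x := mul_le_mul_of_nonneg_right hπ hx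
    have h0 : (0:ℝ) ≤ π * x := mul_nonneg hπpos.le hx
    rw [payoffSNR, rateIncrease]
    rw [← hΓdef, ← hPrdef, ← hxdef]
    have := max_le h1 h0
    linarith
  · have hPr0 : (0:ℝ) * P / (0 + bmi + β) = 0 := by
      rw [zero_mul, zero_div]
    rw [payoffSNR, hPr0, rateIncrease, ← hΓdef]
    have hx0 : relSNR Ps Gsr Grd σ2 0 = 0 := by
      rw [relSNR]; ring_nf
    rw [hx0, add_zero]
    have hL : 0 ≤ Real.logb 2 (1 + Γ) := by
      apply Real.logb_nonneg (by norm_num) (by linarith)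
    rw [max_eq_right (by nlinarith)]
    ring
end

section
/- Existence and uniqueness of the Nash equilibrium bid profile: let f_1, …, f_I be nonnegative reals and β > 0. The system of equations b_i = f_i·(Σ_{j≠i} b_j + β) for i = 1, …, I has a solution with all b_i ≥ 0 if and only if Σ_{i=1}^I f_i/(1+f_i) < 1, and when this condition holds the nonnegative solution is unique. -/
/-- Existence and uniqueness of the Nash equilibrium bid profile: the system
`bᵢ = fᵢ·(∑_{j≠i} bⱼ + β)` has a nonnegative solution iff
`∑ᵢ fᵢ/(1+fᵢ) < 1`, in which case the nonnegative solution is unique. -/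
theorem nash_equilibrium_exists_unique_iff (I : ℕ) (f : Fin I → ℝ)
    (hf : ∀ i, 0 ≤ f i) (β : ℝ) (hβ : 0 < β) :
    ((∃ b : Fin I → ℝ, (∀ i, 0 ≤ b i) ∧
        ∀ i, b i = f i * (∑ j ∈ Finset.univ.erase i, b j + β)) ↔
      ∑ i, f i / (1 + f i) < 1) ∧
    (∑ i, f i / (1 + f i) < 1 →
      ∀ b b' : Fin I → ℝ,
        (∀ i, 0 ≤ b i) → (∀ i, b i = f i * (∑ j ∈ Finset.univ.erase i, b j + β)) →
        (∀ i, 0 ≤ b' i) → (∀ i, b' i = f i * (∑ j ∈ Finset.univ.erase i, b' j + β)) →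
        b = b') := by
  set F := ∑ i, f i / (1 + f i) with hF
  have hfi : ∀ i : Fin I, (0:ℝ) < 1 + f i := fun i => by linarith [hf i]
  have hFnn : 0 ≤ F := Finset.sum_nonneg fun i _ => div_nonneg (hf i) (hfi i).le
  have key : ∀ b : Fin I → ℝ,
      (∀ i, b i = f i * (∑ j ∈ Finset.univ.erase i, b j + β)) →
      (∀ i, b i = f i / (1 + f i) * (∑ j, b j + β)) ∧
      (∑ j, b j) = F * (∑ j, b j + β) := by
    intro b hb
    have hbi : ∀ i, b i = f i / (1 + f i) * (∑ j, b j + β) := by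
      intro i
      have h1 : ∑ j ∈ Finset.univ.erase i, b j = (∑ j, b j) - b i :=
        Finset.sum_erase_eq_sub (Finset.mem_univ i)
      have h2 := hb i
      rw [h1] at h2
      have h3 := hfi i
      field_simp
      nlinarith [h2]
    refine ⟨hbi, ?_⟩
    calc ∑ j, b j = ∑ j, f j / (1 + f j) * (∑ k, b k + β) :=
          Finset.sum_congr rfl fun j _ => hbi j
      _ = F * (∑ j, b j + β) := by rw [hF, Finset.sum_mul]
  constructor
  · constructor
    · rintro ⟨b, hbnn, hb⟩
      obtain ⟨-, hS⟩ := key b hb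
      have hSnn : 0 ≤ ∑ j, b j := Finset.sum_nonneg fun j _ => hbnn j
      nlinarith
    · intro hF1
      have h1F : 0 < 1 - F := by linarith
      set S := F * β / (1 - F) with hSdef
      have hSnn : 0 ≤ S := div_nonneg (mul_nonneg hFnn hβ.le) h1F.le
      have hSβ : S + β = β / (1 - F) := by
        rw [hSdef]; field_simp; ring
      have hFS : F * (S + β) = S := by
        rw [hSβ, hSdef, mul_div_assoc]
      refine ⟨fun i => f i / (1 + f i) * (S + β), fun i => ?_, fun i => ?_⟩
      · exact mul_nonneg (div_nonneg (hf i) (hfi i).le) (by linarith)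
      · have hsum : ∑ j : Fin I, f j / (1 + f j) * (S + β) = S := by
          rw [← Finset.sum_mul, ← hF, hFS]
        have h1 : ∑ j ∈ Finset.univ.erase i, f j / (1 + f j) * (S + β)
            = S - f i / (1 + f i) * (S + β) := by
          rw [Finset.sum_erase_eq_sub (Finset.mem_univ i), hsum]
        rw [h1]
        have h3 := hfi i
        have hc : (1 + f i) * (f i / (1 + f i) * (S + β)) = f i * (S + β) := by
          field_simp
        linear_combination hc
  · intro hF1 b b' hbnn hb hbnn' hb'
    obtain ⟨hbi, hS⟩ := key b hb
    obtain ⟨hbi', hS'⟩ := key b' hb'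
    have h1F : 0 < 1 - F := by linarith
    have hSS : ∑ j, b j = ∑ j, b' j := by
      have : (∑ j, b j - ∑ j, b' j) * (1 - F) = 0 := by nlinarith
      rcases mul_eq_zero.mp this with h | h
      · linarith
      · linarith
    funext i
    rw [hbi i, hbi' i, hSS]
end

section
/- Equilibrium allocation formula: let f_1, …, f_I be nonnegative reals, β > 0, P > 0, and suppose b = (b_1, …, b_I) is a nonnegative solution of b_i = f_i·(Σ_{j≠i} b_j + β) for all i. Then each user's bid share satisfies b_i/(Σ_j b_j + β) = f_i/(1+f_i), so the power allocated to user i equals P_{r,d_i} = P·f_i/(1+f_i), and the total allocated power is strictly less than P: Σ_{i=1}^I f_i/(1+f_i) < 1. -/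
/-- Equilibrium allocation formula: at a nonnegative solution of the
best-response system `bᵢ = fᵢ·(∑_{j≠i} bⱼ + β)`, each user's bid share equals
`fᵢ/(1+fᵢ)`, so the allocated power is `P·fᵢ/(1+fᵢ)`, and the total allocated
power is strictly less than `P`. -/
theorem equilibrium_allocation (I : ℕ) (f : Fin I → ℝ) (hf : ∀ i, 0 ≤ f i)
    (β P : ℝ) (hβ : 0 < β) (hP : 0 < P)
    (b : Fin I → ℝ) (hb : ∀ i, 0 ≤ b i)
    (heq : ∀ i, b i = f i * (∑ j ∈ Finset.univ.erase i, b j + β)) :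
    (∀ i, b i / (∑ j, b j + β) = f i / (1 + f i)) ∧
    (∀ i, b i * P / (∑ j, b j + β) = P * (f i / (1 + f i))) ∧
    ∑ i, f i / (1 + f i) < 1 := by
  have hSpos : 0 < ∑ j, b j + β :=
    add_pos_of_nonneg_of_pos (Finset.sum_nonneg fun j _ => hb j) hβ
  have key : ∀ i, b i / (∑ j, b j + β) = f i / (1 + f i) := by
    intro i
    have h1 : (0:ℝ) < 1 + f i := by linarith [hf i]
    have he : ∑ j ∈ Finset.univ.erase i, b j = (∑ j, b j) - b i :=
      Finset.sum_erase_eq_sub (Finset.mem_univ i)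
    have hi := heq i
    rw [he] at hi
    field_simp
    nlinarith [hi]
  refine ⟨key, fun i => ?_, ?_⟩
  · rw [mul_comm (b i) P, mul_div_assoc, key i]
  · have hsum : ∑ i, f i / (1 + f i) = (∑ j, b j) / (∑ j, b j + β) := by
      rw [show (∑ i, f i / (1 + f i)) = ∑ i, b i / (∑ j, b j + β) from
        Finset.sum_congr rfl fun i _ => (key i).symm, ← Finset.sum_div]
    rw [hsum, div_lt_one hSpos]
    linarith
end

section
/- Theorem 6 (convergence of distributed best-response updates): let f_1, …, f_I be nonnegative reals with Σ_{i=1}^I f_i/(1+f_i) < 1 and let β > 0, so that the system b_i = f_i·(Σ_{j≠i} b_j + β) has a unique nonnegative solution b*. Then for any nonnegative initial bid vector b(0), the iteration b_i(t) = f_i·(Σ_{j≠i} b_j(t−1) + β) converges to b*, and the convergence is geometric: there exist C ≥ 0 and r ∈ [0,1) such that ‖b(t) − b*‖ ≤ C·rᵗ for all t. -/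
open Filter

/-- Theorem 6: global geometric convergence of the distributed best-response
updates `bᵢ(t) = fᵢ·(∑_{j≠i} bⱼ(t−1) + β)` to the unique nonnegative Nash
equilibrium `b*`, from any nonnegative initial bid vector. -/
theorem best_response_updates_converge (I : ℕ) (f : Fin I → ℝ)
    (hf : ∀ i, 0 ≤ f i) (β : ℝ) (hβ : 0 < β)
    (hsum : ∑ i, f i / (1 + f i) < 1)
    (bstar : Fin I → ℝ) (hbstar_nonneg : ∀ i, 0 ≤ bstar i)
    (hbstar : ∀ i, bstar i = f i * (∑ j ∈ Finset.univ.erase i, bstar j + β))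
    (b : ℕ → Fin I → ℝ) (hb0 : ∀ i, 0 ≤ b 0 i)
    (hupd : ∀ t i, b (t + 1) i = f i * (∑ j ∈ Finset.univ.erase i, b t j + β)) :
    Tendsto b atTop (nhds bstar) ∧
    ∃ C : ℝ, 0 ≤ C ∧ ∃ r : ℝ, 0 ≤ r ∧ r < 1 ∧
      ∀ t : ℕ, ‖b t - bstar‖ ≤ C * r ^ t := by
  have hfpos : ∀ i, (0:ℝ) < 1 + f i := fun i => by linarith [hf i]
  set r : ℝ := ∑ i, f i / (1 + f i) with hr
  have hr0 : 0 ≤ r := Finset.sum_nonneg fun i _ => div_nonneg (hf i) (hfpos i).le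
  have hr1 : r < 1 := hsum
  set e : ℕ → Fin I → ℝ := fun t i => b t i - bstar i with he
  set V : ℕ → ℝ := fun t => ∑ i, |e t i| / (1 + f i) with hV
  have hVnn : ∀ t, 0 ≤ V t := fun t =>
    Finset.sum_nonneg fun i _ => div_nonneg (abs_nonneg _) (hfpos i).le
  -- error recursion
  have herec : ∀ t i, e (t+1) i = f i * ∑ j ∈ Finset.univ.erase i, e t j := by
    intro t i
    simp only [he, hupd t i, hbstar i, ← mul_sub]
    rw [Finset.sum_sub_distrib]
    ring_nf
  -- contraction of V
  have key : ∀ t, V (t+1) ≤ r * V t := by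
    intro t
    set T : ℝ := ∑ j, |e t j| with hT
    have hTerm : ∀ i, |e (t+1) i| / (1 + f i) ≤ f i / (1 + f i) * (T - |e t i|) := by
      intro i
      have h1 : |e (t+1) i| = f i * |∑ j ∈ Finset.univ.erase i, e t j| := by
        rw [herec t i, abs_mul, abs_of_nonneg (hf i)]
      have h2 : |∑ j ∈ Finset.univ.erase i, e t j| ≤ T - |e t i| := by
        calc |∑ j ∈ Finset.univ.erase i, e t j|
            ≤ ∑ j ∈ Finset.univ.erase i, |e t j| := Finset.abs_sum_le_sum_abs _ _
          _ = T - |e t i| := Finset.sum_erase_eq_sub (Finset.mem_univ i)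
      have h3 := mul_le_mul_of_nonneg_left h2 (hf i)
      rw [h1, div_le_iff₀ (hfpos i), div_mul_eq_mul_div, div_mul_eq_mul_div,
        le_div_iff₀ (hfpos i)]
      nlinarith [hfpos i]
    calc V (t+1) ≤ ∑ i, f i / (1 + f i) * (T - |e t i|) :=
          Finset.sum_le_sum fun i _ => hTerm i
      _ = ∑ i, (r * |e t i| - f i / (1 + f i) * |e t i|) := by
          simp only [mul_sub]
          rw [Finset.sum_sub_distrib, Finset.sum_sub_distrib, ← Finset.sum_mul, ← hr,
            hT, Finset.mul_sum]
      _ ≤ ∑ i, r * (|e t i| / (1 + f i)) := by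
          apply Finset.sum_le_sum
          intro i _
          have hfi := hfpos i
          have habs := abs_nonneg (e t i)
          have hkey : r - f i / (1 + f i) ≤ r / (1 + f i) := by
            rw [le_div_iff₀ hfi]
            have hd : f i / (1 + f i) * (1 + f i) = f i :=
              div_mul_cancel₀ _ (ne_of_gt hfi)
            have hmn : (r - 1) * f i ≤ 0 :=
              mul_nonpos_of_nonpos_of_nonneg (by linarith) (hf i)
            nlinarith [hd, hmn]
          calc r * |e t i| - f i / (1 + f i) * |e t i|
              = (r - f i / (1 + f i)) * |e t i| := by ring
            _ ≤ (r / (1 + f i)) * |e t i| := mul_le_mul_of_nonneg_right hkey habs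
            _ = r * (|e t i| / (1 + f i)) := by ring
      _ = r * V t := by rw [← Finset.mul_sum]
  -- geometric decay of V
  have hVgeo : ∀ t, V t ≤ V 0 * r ^ t := by
    intro t
    induction t with
    | zero => simp
    | succ n ih =>
        calc V (n+1) ≤ r * V n := key n
          _ ≤ r * (V 0 * r ^ n) := mul_le_mul_of_nonneg_left ih hr0
          _ = V 0 * r ^ (n+1) := by ring
  -- bound each coordinate
  set S : ℝ := ∑ i, (1 + f i) with hS
  have hSnn : 0 ≤ S := Finset.sum_nonneg fun i _ => (hfpos i).le
  have hcoord : ∀ t i, |e t i| ≤ S * V 0 * r ^ t := by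
    intro t i
    have h1 : |e t i| / (1 + f i) ≤ V t :=
      Finset.single_le_sum (f := fun j => |e t j| / (1 + f j))
        (fun j _ => div_nonneg (abs_nonneg _) (hfpos j).le) (Finset.mem_univ i)
    have h2 : |e t i| ≤ (1 + f i) * V t := by
      rw [div_le_iff₀ (hfpos i)] at h1
      linarith [h1]
    have h3 : (1 + f i) ≤ S :=
      Finset.single_le_sum (fun j _ => (hfpos j).le) (Finset.mem_univ i)
    calc |e t i| ≤ (1 + f i) * V t := h2
      _ ≤ S * V t := mul_le_mul_of_nonneg_right h3 (hVnn t)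
      _ ≤ S * (V 0 * r ^ t) := mul_le_mul_of_nonneg_left (hVgeo t) hSnn
      _ = S * V 0 * r ^ t := by ring
  have hnorm : ∀ t, ‖b t - bstar‖ ≤ S * V 0 * r ^ t := by
    intro t
    have hC : 0 ≤ S * V 0 * r ^ t :=
      mul_nonneg (mul_nonneg hSnn (hVnn 0)) (pow_nonneg hr0 t)
    rw [pi_norm_le_iff_of_nonneg hC]
    intro i
    simpa [Real.norm_eq_abs, he] using hcoord t i
  constructor
  · rw [tendsto_iff_norm_sub_tendsto_zero]
    have hlim : Tendsto (fun t : ℕ => S * V 0 * r ^ t) atTop (nhds 0) := by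
      have := (tendsto_pow_atTop_nhds_zero_of_lt_one hr0 hr1).const_mul (S * V 0)
      simpa using this
    exact squeeze_zero (fun t => norm_nonneg _) hnorm hlim
  · exact ⟨S * V 0, mul_nonneg hSnn (hVnn 0), r, hr0, hr1, hnorm⟩
end

section
/- Spectral condition for the best-response dynamics: let f_1, …, f_I be nonnegative reals and let F be the I×I real matrix with entries F_{ij} = f_i for j ≠ i and F_{ii} = 0. Then every eigenvalue of F has modulus strictly less than 1 if and only if Σ_{i=1}^I f_i/(1+f_i) < 1. -/
open Matrix Polynomial Finset

lemma charpoly_root_iff_eigen {n : Type*} [Fintype n] [DecidableEq n]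
    (M : Matrix n n ℂ) (μ : ℂ) :
    M.charpoly.IsRoot μ ↔ ∃ v ≠ 0, M.mulVec v = μ • v := by
  have h1 : M.charpoly.eval μ = (μ • (1 : Matrix n n ℂ) - M).det := by
    rw [Matrix.charpoly, eval_det, matPolyEquiv_charmatrix]
    simp only [eval_sub, eval_X, eval_C, Matrix.scalar_apply]
    rw [Matrix.smul_eq_diagonal_mul]
    simp
  rw [Polynomial.IsRoot, h1, ← Matrix.exists_mulVec_eq_zero_iff]
  constructor
  · rintro ⟨v, hv, h⟩
    refine ⟨v, hv, ?_⟩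
    rw [Matrix.sub_mulVec, Matrix.smul_mulVec, Matrix.one_mulVec, sub_eq_zero] at h
    exact h.symm
  · rintro ⟨v, hv, h⟩
    refine ⟨v, hv, ?_⟩
    rw [Matrix.sub_mulVec, Matrix.smul_mulVec, Matrix.one_mulVec, sub_eq_zero, h]

/-- Spectral condition for the best-response dynamics: for the update matrix
`F` with `F i j = f i` for `j ≠ i` and `F i i = 0`, every (complex) eigenvalue
of `F` has modulus strictly less than `1` iff `∑ᵢ fᵢ/(1+fᵢ) < 1`. -/
theorem best_response_matrix_spectral_condition (I : ℕ) (f : Fin I → ℝ)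
    (hf : ∀ i, 0 ≤ f i) :
    (∀ μ : ℂ,
      (Matrix.charpoly
        ((Matrix.of fun i j : Fin I => if j = i then (0 : ℝ) else f i).map
          (fun x : ℝ => (x : ℂ)))).IsRoot μ →
      ‖μ‖ < 1) ↔
    ∑ i, f i / (1 + f i) < 1 := by
  set M : Matrix (Fin I) (Fin I) ℂ :=
    (Matrix.of fun i j : Fin I => if j = i then (0 : ℝ) else f i).map
      (fun x : ℝ => (x : ℂ)) with hM
  have hMij : ∀ i j, M i j = if j = i then (0 : ℂ) else (f i : ℂ) := by
    intro i j
    simp [hM, Matrix.map_apply, apply_ite (fun x : ℝ => (x : ℂ))]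
  have hmul : ∀ (v : Fin I → ℂ) (i : Fin I),
      M.mulVec v i = (f i : ℂ) * ∑ j ∈ univ.erase i, v j := by
    intro v i
    rw [Matrix.mulVec, dotProduct, Finset.mul_sum,
      ← Finset.sum_erase_add _ _ (Finset.mem_univ i),
      show M i i * v i = 0 from by rw [hMij]; simp, add_zero]
    exact Finset.sum_congr rfl fun j hj => by
      rw [hMij, if_neg (Finset.mem_erase.1 hj).1]
  constructor
  · -- LHS → sum < 1, by contradiction
    intro hL
    by_contra hs
    push_neg at hs
    have hex : ∃ i, 0 < f i := by
      by_contra hall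
      push_neg at hall
      have h0 : ∀ i, f i = 0 := fun i => le_antisymm (hall i) (hf i)
      simp [h0] at hs
      linarith
    obtain ⟨i0, hi0⟩ := hex
    set R : ℝ := 1 + ∑ i, f i with hR
    have hfsum : 0 ≤ ∑ i, f i := Finset.sum_nonneg fun i _ => hf i
    have hR1 : (1 : ℝ) ≤ R := by simp only [hR]; linarith
    have hgR : ∑ i, f i / (R + f i) < 1 := by
      have h1 : ∀ i ∈ univ, f i / (R + f i) ≤ f i / R := by
        intro i _
        rw [div_le_div_iff₀ (by linarith [hf i]) (by linarith)]
        nlinarith [hf i]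
      calc ∑ i, f i / (R + f i) ≤ ∑ i, f i / R := Finset.sum_le_sum h1
        _ = (∑ i, f i) / R := by rw [Finset.sum_div]
        _ < 1 := by rw [div_lt_one (by linarith)]; linarith
    have hcont : ContinuousOn (fun r : ℝ => ∑ i, f i / (r + f i)) (Set.Icc 1 R) := by
      apply continuousOn_finset_sum
      intro i _
      apply ContinuousOn.div continuousOn_const
        (continuousOn_id.add continuousOn_const)
      intro r hr
      have h1 := hr.1
      have h2 := hf i
      simp only [Pi.add_apply, id]
      linarith
    have h1mem : (1 : ℝ) ∈ Set.Icc (∑ i, f i / (R + f i)) (∑ i, f i / (1 + f i)) :=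
      ⟨le_of_lt hgR, hs⟩
    obtain ⟨r, hrmem, hgr⟩ := intermediate_value_Icc' hR1 hcont h1mem
    have hr1 : (1 : ℝ) ≤ r := hrmem.1
    set y : Fin I → ℝ := fun i => f i / (r + f i) with hy
    have hS : ∑ j, y j = 1 := by simpa [hy] using hgr
    have hden : ∀ i, 0 < r + f i := fun i => by have := hf i; linarith
    have hkey : ∀ i, f i * ((∑ j, y j) - y i) = r * y i := by
      intro i
      rw [hS]
      have h := (hden i).ne'
      simp only [hy]
      field_simp
      ring
    set x : Fin I → ℂ := fun i => (y i : ℂ) with hx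
    have hx0 : x ≠ 0 := by
      intro h
      have h1 : x i0 = 0 := congrFun h i0
      rw [hx] at h1
      simp only [Complex.ofReal_eq_zero] at h1
      have h2 : 0 < y i0 := div_pos hi0 (hden i0)
      exact h2.ne' h1
    have heig : M.mulVec x = (r : ℂ) • x := by
      funext i
      rw [hmul x i]
      have herase : ∑ j ∈ univ.erase i, x j = ((∑ j, y j : ℝ) : ℂ) - ((y i : ℝ) : ℂ) := by
        rw [← Finset.sum_erase_add _ _ (Finset.mem_univ i)]
        push_cast [hx]
        ring
      rw [herase]
      simp only [Pi.smul_apply, smul_eq_mul, hx]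
      exact_mod_cast hkey i
    have hroot := (charpoly_root_iff_eigen M (r : ℂ)).2 ⟨x, hx0, heig⟩
    have hlt := hL (r : ℂ) hroot
    rw [Complex.norm_real, Real.norm_eq_abs, abs_of_nonneg (by linarith)] at hlt
    linarith
  · -- sum < 1 → LHS
    intro hs μ hroot
    by_contra habs
    push_neg at habs
    obtain ⟨v, hv0, hv⟩ := (charpoly_root_iff_eigen M μ).1 hroot
    set T : ℝ := ∑ j, ‖v j‖ with hT
    have hTpos : 0 < T := by
      obtain ⟨i, hi⟩ := Function.ne_iff.1 hv0
      have hi' : v i ≠ 0 := by simpa using hi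
      have h1 : 0 < ‖v i‖ := norm_pos_iff.mpr hi'
      exact lt_of_lt_of_le h1
        (Finset.single_le_sum (fun j _ => norm_nonneg (v j)) (Finset.mem_univ i))
    have hbound : ∀ i, ‖v i‖ ≤ f i * T / (1 + f i) := by
      intro i
      have h1 : ‖μ‖ * ‖v i‖
          = f i * ‖∑ j ∈ univ.erase i, v j‖ := by
        rw [← norm_mul]
        have h2 : μ * v i = (f i : ℂ) * ∑ j ∈ univ.erase i, v j := by
          have h3 := congrFun hv i
          rw [hmul v i] at h3
          simpa [smul_eq_mul, mul_comm] using h3.symm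
        rw [h2, norm_mul, Complex.norm_real, Real.norm_eq_abs, abs_of_nonneg (hf i)]
      have h2 : ‖∑ j ∈ univ.erase i, v j‖ ≤ T - ‖v i‖ := by
        have hle := norm_sum_le (univ.erase i) v
        have heq := Finset.sum_erase_add univ (fun j => ‖v j‖) (Finset.mem_univ i)
        rw [hT]
        linarith
      have h3 : ‖μ‖ * ‖v i‖ ≤ f i * (T - ‖v i‖) := by
        rw [h1]
        exact mul_le_mul_of_nonneg_left h2 (hf i)
      have h5 : 1 * ‖v i‖ ≤ ‖μ‖ * ‖v i‖ :=
        mul_le_mul_of_nonneg_right habs (norm_nonneg (v i))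
      rw [le_div_iff₀ (by linarith [hf i] : (0:ℝ) < 1 + f i)]
      nlinarith [norm_nonneg (v i)]
    have hfin : T ≤ T * ∑ i, f i / (1 + f i) := by
      calc T = ∑ i, ‖v i‖ := hT
        _ ≤ ∑ i, f i * T / (1 + f i) := Finset.sum_le_sum fun i _ => hbound i
        _ = T * ∑ i, f i / (1 + f i) := by
            rw [Finset.mul_sum]; exact Finset.sum_congr rfl fun i _ => by ring
    nlinarith
end
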